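/- arXiv:1102.1873 — 2 statements merged into one kernel-verified Lean document; each statement's English description precedes it below -/
import Mathlib

section
/- Let L be the rank-2 lattice with basis H, C₀ and intersection form H·H = 70, H·C₀ = 2, C₀·C₀ = -2. Suppose Z = aH + bC₀ with a > 0 and a, b ∈ ℤ satisfies Z² ≥ -2. Then (H - 4C₀)·Z > 0. -/
/-- The intersection form on the rank-2 lattice `ZH ⊕ ZC₀` (elements written in
coordinates `(a, b) = a*H + b*C₀`), determined by `H·H = 70`, `H·C₀ = 2`, `C₀·C₀ = -2`.
Here `H = (1, 0)` and `C₀ = (0, 1)`. -/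
def interForm (v w : ℤ × ℤ) : ℤ :=
  70 * v.1 * w.1 + 2 * (v.1 * w.2 + v.2 * w.1) - 2 * v.2 * w.2

/-- If `Z = aH + bC₀` with `a > 0` and `Z² ≥ -2`, then `(H - 4C₀)·Z > 0`. -/
theorem stmt5 (a b : ℤ) (ha : 0 < a) (hZ : interForm (a, b) (a, b) ≥ -2) :
    0 < interForm ((1, 0) - 4 • (0, 1)) (a, b) := by
  simp only [interForm, Prod.fst_sub, Prod.snd_sub, Prod.smul_fst, Prod.smul_snd] at *
  norm_num at *
  nlinarith [sq_nonneg (5*b + 31*a), sq_nonneg a, sq_nonneg b]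
end

section
/- Let L be the rank-2 lattice with basis H, C₀ and intersection form H·H = 70, H·C₀ = 2, C₀·C₀ = -2, and for k ∈ {1, 2, 3, 4} let Hₖ = H - kC₀. Suppose Z = aH + bC₀ with a > 0 and Z² ≥ -2. Then Hₖ·Z > 0 for every k ∈ {1, 2, 3, 4}. -/
/-- For `k ∈ {1,2,3,4}` and `Z = aH + bC₀` with `a > 0` and `Z² ≥ -2`,
we have `(H - kC₀)·Z > 0`. -/
theorem stmt6 (k : ℤ) (hk : k ∈ ({1, 2, 3, 4} : Finset ℤ))
    (a b : ℤ) (ha : 0 < a) (hZ : interForm (a, b) (a, b) ≥ -2) :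
    0 < interForm ((1, 0) - k • (0, 1)) (a, b) := by
  simp only [interForm, Prod.fst_sub, Prod.snd_sub, Prod.smul_fst, Prod.smul_snd,
    smul_eq_mul] at *
  fin_cases hk <;> nlinarith [sq_nonneg (b - a), sq_nonneg (b + 6*a), sq_nonneg (b + 5*a), ha, hZ]
end
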